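/- arXiv:2410.16604 — 3 statements merged into one kernel-verified Lean document; each statement's English description precedes it below -/
import Mathlib

section
/- Let G be a connected simple graph on n ≥ 2 vertices and let 0 < p < 2 be a real number. Then E_p(G) = 2(n−1)^{p/2} (that is, E_p(G) = E_p(S_n)) if and only if G is isomorphic to the star graph S_n. -/
/-!
Put `c = n - 1` and `aᵢ = λᵢ²`, so that `E_p(G) = ∑ aᵢ ^ (p / 2)` and `∑ aᵢ = tr A² = 2m`.
Connectedness gives `∑ aᵢ ≥ 2c`, and Gershgorin's theorem for `A²` together with a degree
count gives Hong's bound `aᵢ + c ≤ ∑ aⱼ`. For `0 < q < 1` the chord bound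
`a ^ q ≥ a * b ^ (q - 1)` on `[0, b]`, used with `b` the largest `aᵢ` and with `b` the sum of
the others, shows that under these constraints `∑ aᵢ ^ q ≥ 2 c ^ q`, with equality exactly
when every `aᵢ` is `0` or `c` and `∑ aᵢ = 2c`; that is, when `A³ = c A` and `G` has `n - 1`
edges. For a leaf `ℓ` with neighbour `w`, `(A³)_{ℓw} = deg w`, so `w` is adjacent to all other
vertices, and the edge count leaves no room for further edges: `G` is a star.
-/

open Finset MeasureTheory

/-- The eigenvalues of the (real) adjacency matrix of a simple graph on `Fin n`. -/
noncomputable def adjEigenvalues {n : ℕ} (G : SimpleGraph (Fin n)) [DecidableRel G.Adj] :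
    Fin n → ℝ :=
  Matrix.IsHermitian.eigenvalues
    ((Matrix.conjTranspose_eq_transpose_of_trivial (G.adjMatrix ℝ)).trans G.isSymm_adjMatrix)

/-- The `p`-energy of a graph: the sum of the `p`-th powers of the absolute values of the
adjacency eigenvalues. -/
noncomputable def pEnergy {n : ℕ} (G : SimpleGraph (Fin n)) [DecidableRel G.Adj] (p : ℝ) : ℝ :=
  ∑ i, |adjEigenvalues G i| ^ p

/-- The star graph on `Fin n`: vertex `0` is adjacent to all other vertices. -/
def starGraph (n : ℕ) : SimpleGraph (Fin n) where
  Adj u v := ((u : ℕ) = 0 ∨ (v : ℕ) = 0) ∧ u ≠ v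
  symm := ⟨fun _ _ h => ⟨h.1.symm, h.2.symm⟩⟩
  loopless := ⟨fun _ h => h.2 rfl⟩

instance (n : ℕ) : DecidableRel (starGraph n).Adj :=
  fun u v => inferInstanceAs (Decidable (((u : ℕ) = 0 ∨ (v : ℕ) = 0) ∧ u ≠ v))

open Matrix

namespace Real
variable {a b q : ℝ}

lemma self_mul_rpow_sub_one (hb : b ≠ 0) (q : ℝ) : b * b ^ (q - 1) = b ^ q := by
  rw [rpow_sub_one hb, mul_div_cancel₀ _ hb]

lemma abs_rpow_eq_sq_rpow (x p : ℝ) : |x| ^ p = (x ^ 2) ^ (p / 2) := by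
  rw [← sq_abs, ← rpow_natCast, ← rpow_mul (abs_nonneg x)]
  ring_nf

lemma mul_rpow_sub_one_le_rpow (hq : q ≤ 1) (ha : 0 ≤ a) (hab : a ≤ b) :
    a * b ^ (q - 1) ≤ a ^ q := by
  rcases ha.eq_or_lt with rfl | ha
  · simpa using zero_rpow_nonneg q
  calc a * b ^ (q - 1) ≤ a * a ^ (q - 1) :=
        mul_le_mul_of_nonneg_left (rpow_le_rpow_of_nonpos ha hab (by linarith)) ha.le
    _ = a ^ q := self_mul_rpow_sub_one ha.ne' q

lemma mul_rpow_sub_one_lt_rpow (hq : q < 1) (ha : 0 < a) (hab : a < b) :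
    a * b ^ (q - 1) < a ^ q := by
  calc a * b ^ (q - 1) < a * a ^ (q - 1) :=
        mul_lt_mul_of_pos_left (rpow_lt_rpow_of_neg ha hab (by linarith)) ha
    _ = a ^ q := self_mul_rpow_sub_one ha.ne' q

variable {ι : Type*} {s : Finset ι} {a : ι → ℝ}

lemma sum_mul_rpow_sub_one_le_sum_rpow (hq : q ≤ 1) (ha : ∀ i ∈ s, 0 ≤ a i ∧ a i ≤ b) :
    (∑ i ∈ s, a i) * b ^ (q - 1) ≤ ∑ i ∈ s, a i ^ q := by
  rw [sum_mul]
  exact sum_le_sum fun i hi => mul_rpow_sub_one_le_rpow hq (ha i hi).1 (ha i hi).2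

lemma eq_zero_or_eq_of_sum_rpow_eq (hq : q < 1) (ha : ∀ i ∈ s, 0 ≤ a i ∧ a i ≤ b)
    (h : ∑ i ∈ s, a i ^ q = (∑ i ∈ s, a i) * b ^ (q - 1)) : ∀ i ∈ s, a i = 0 ∨ a i = b := by
  rw [sum_mul] at h
  have heq := (sum_eq_sum_iff_of_le fun i hi =>
    mul_rpow_sub_one_le_rpow hq.le (ha i hi).1 (ha i hi).2).mp h.symm
  intro i hi
  by_contra! hne
  exact (mul_rpow_sub_one_lt_rpow hq (lt_of_le_of_ne (ha i hi).1 hne.1.symm)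
    (lt_of_le_of_ne (ha i hi).2 hne.2)).ne (heq i hi)

lemma sum_rpow_of_forall_eq_zero_or_eq (hq : 0 < q) (hb : 0 < b)
    (ha : ∀ i ∈ s, a i = 0 ∨ a i = b) :
    ∑ i ∈ s, a i ^ q = (∑ i ∈ s, a i) * b ^ (q - 1) := by
  rw [sum_mul]
  refine sum_congr rfl fun i hi => ?_
  rcases ha i hi with h | h
  · simp [h, zero_rpow hq.ne']
  · rw [h, self_mul_rpow_sub_one hb.ne']

variable [Fintype ι] {c : ℝ}

lemma two_mul_rpow_lt_sum_rpow (hq : q < 1) (hc : 0 < c) (ha : ∀ i, 0 ≤ a i)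
    (hsum : 2 * c ≤ ∑ i, a i) (hsmall : ∀ i, a i < c) : 2 * c ^ q < ∑ i, a i ^ q := by
  have hne : ∑ i, a i ≠ 0 := by linarith
  obtain ⟨i₀, -, hmax⟩ := exists_max_image univ a (nonempty_of_sum_ne_zero hne)
  have hpos : 0 < a i₀ := by
    by_contra! h
    linarith [sum_nonpos fun i (_ : i ∈ univ) => (hmax i (mem_univ i)).trans h]
  calc 2 * c ^ q = 2 * c * c ^ (q - 1) := by rw [mul_assoc, self_mul_rpow_sub_one hc.ne']
    _ < 2 * c * a i₀ ^ (q - 1) :=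
        mul_lt_mul_of_pos_left (rpow_lt_rpow_of_neg hpos (hsmall i₀) (by linarith)) (by linarith)
    _ ≤ (∑ i, a i) * a i₀ ^ (q - 1) :=
        mul_le_mul_of_nonneg_right hsum (rpow_nonneg hpos.le _)
    _ ≤ ∑ i, a i ^ q :=
        sum_mul_rpow_sub_one_le_sum_rpow hq.le fun i _ => ⟨ha i, hmax i (mem_univ i)⟩

lemma eq_zero_or_eq_of_sum_rpow_eq_two_mul_rpow (hq0 : 0 < q) (hq1 : q < 1) (hc : 0 < c)
    (ha : ∀ i, 0 ≤ a i) (hmax : ∀ i, a i + c ≤ ∑ j, a j) {i₀ : ι} (hi₀ : c ≤ a i₀)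
    (h : ∑ i, a i ^ q = 2 * c ^ q) : (∀ i, a i = 0 ∨ a i = c) ∧ ∑ i, a i = 2 * c := by
  classical
  set T := ∑ i ∈ univ.erase i₀, a i
  have hsplit : a i₀ + T = ∑ i, a i := add_sum_erase _ _ (mem_univ i₀)
  have hsplit_q : a i₀ ^ q + ∑ i ∈ univ.erase i₀, a i ^ q = ∑ i, a i ^ q :=
    add_sum_erase _ (fun i => a i ^ q) (mem_univ i₀)
  have hT : c ≤ T := by linarith [hmax i₀]
  have hbound : ∀ i ∈ univ.erase i₀, 0 ≤ a i ∧ a i ≤ T :=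
    fun i hi => ⟨ha i, single_le_sum (fun j _ => ha j) hi⟩
  have hrest : T ^ q ≤ ∑ i ∈ univ.erase i₀, a i ^ q := by
    rw [← self_mul_rpow_sub_one (hc.trans_le hT).ne']
    exact sum_mul_rpow_sub_one_le_sum_rpow hq1.le hbound
  have hc_le_a : c ^ q ≤ a i₀ ^ q := rpow_le_rpow hc.le hi₀ hq0.le
  have hc_le_T : c ^ q ≤ T ^ q := rpow_le_rpow hc.le hT hq0.le
  have ha_eq : a i₀ = c := rpow_left_injOn hq0.ne' (ha i₀) hc.le (by linarith)
  have hT_eq : T = c := rpow_left_injOn hq0.ne' (sum_nonneg fun i _ => ha i) hc.le (by linarith)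
  have hrest_eq : ∑ i ∈ univ.erase i₀, a i ^ q = T * T ^ (q - 1) := by
    rw [self_mul_rpow_sub_one (hc.trans_le hT).ne']
    linarith
  refine ⟨fun i => ?_, by linarith⟩
  rcases eq_or_ne i i₀ with rfl | hi
  · exact Or.inr ha_eq
  · simpa [hT_eq] using eq_zero_or_eq_of_sum_rpow_eq hq1 hbound hrest_eq i (by simp [hi])

theorem sum_rpow_eq_two_mul_rpow_iff (hq0 : 0 < q) (hq1 : q < 1) (hc : 0 < c)
    (ha : ∀ i, 0 ≤ a i) (hsum : 2 * c ≤ ∑ i, a i) (hmax : ∀ i, a i + c ≤ ∑ j, a j) :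
    ∑ i, a i ^ q = 2 * c ^ q ↔ (∀ i, a i = 0 ∨ a i = c) ∧ ∑ i, a i = 2 * c := by
  refine ⟨fun h => ?_, fun ⟨hac, hsum_eq⟩ => ?_⟩
  · by_cases hsmall : ∀ i, a i < c
    · exact absurd h (two_mul_rpow_lt_sum_rpow hq1 hc ha hsum hsmall).ne'
    · obtain ⟨i₀, hi₀⟩ := not_forall.mp hsmall
      exact eq_zero_or_eq_of_sum_rpow_eq_two_mul_rpow hq0 hq1 hc ha hmax (not_lt.mp hi₀) h
  · rw [sum_rpow_of_forall_eq_zero_or_eq hq0 hc fun i _ => hac i, hsum_eq, mul_assoc,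
      self_mul_rpow_sub_one hc.ne']

end Real

lemma pow_three_eq_mul_iff {R : Type*} [CommRing R] [NoZeroDivisors R] {x c : R} :
    x ^ 3 = c * x ↔ x ^ 2 = 0 ∨ x ^ 2 = c := by
  rw [← sub_eq_zero, show x ^ 3 - c * x = x * (x ^ 2 - c) by ring, mul_eq_zero, sub_eq_zero,
    pow_eq_zero_iff two_ne_zero]

lemma Matrix.exists_le_sum_row_of_hasEigenvalue {n : Type*} [Fintype n] [DecidableEq n]
    {A : Matrix n n ℝ} (hA : ∀ i j, 0 ≤ A i j) {μ : ℝ}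
    (hμ : Module.End.HasEigenvalue (toLin' A) μ) : ∃ k, μ ≤ ∑ j, A k j := by
  obtain ⟨k, hk⟩ := eigenvalue_mem_ball hμ
  refine ⟨k, ?_⟩
  rw [Metric.mem_closedBall, Real.dist_eq] at hk
  rw [← add_sum_erase _ _ (mem_univ k)]
  have hnorm : ∑ j ∈ univ.erase k, ‖A k j‖ = ∑ j ∈ univ.erase k, A k j :=
    sum_congr rfl fun j _ => Real.norm_of_nonneg (hA k j)
  linarith [le_abs_self (μ - A k k)]

namespace Matrix.IsHermitian
variable {𝕜 n : Type*} [RCLike 𝕜] [Fintype n] [DecidableEq n] {A : Matrix n n 𝕜}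
  (hA : A.IsHermitian)
include hA

lemma trace_cfc (f : ℝ → ℝ) : (cfc f A).trace = ∑ i, (f (hA.eigenvalues i) : 𝕜) := by
  rw [hA.cfc_eq, IsHermitian.cfc, Unitary.conjStarAlgAut_apply, trace_mul_cycle,
    Unitary.star_mul_self_of_mem (hA.eigenvectorUnitary).2, one_mul, trace_diagonal]
  rfl

lemma trace_sq : (A ^ 2).trace = ∑ i, (hA.eigenvalues i ^ 2 : 𝕜) := by
  rw [← cfc_pow_id (R := ℝ) A 2 hA.isSelfAdjoint, hA.trace_cfc]
  push_cast
  rfl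

lemma pow_three_eq_smul_iff (c : ℝ) :
    A ^ 3 = c • A ↔ ∀ i, hA.eigenvalues i ^ 3 = c * hA.eigenvalues i := by
  rw [← cfc_pow_id (R := ℝ) A 3 hA.isSelfAdjoint, ← cfc_const_mul_id c A hA.isSelfAdjoint,
    cfc_eq_cfc_iff_eqOn, hA.spectrum_real_eq_range_eigenvalues, Set.eqOn_range]
  exact funext_iff

lemma hasEigenvalue_eigenvalues (i : n) :
    Module.End.HasEigenvalue (toLin' A) (hA.eigenvalues i : 𝕜) := by
  rw [Module.End.hasEigenvalue_iff_mem_spectrum, spectrum_toLin']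
  exact spectrum.algebraMap_mem 𝕜 (hA.eigenvalues_mem_spectrum_real i)

end Matrix.IsHermitian

namespace SimpleGraph
variable {V : Type*}

def starAt (c : V) : SimpleGraph V := fromRel fun x _ => x = c

lemma starAt_adj {c x y : V} : (starAt c).Adj x y ↔ x ≠ y ∧ (x = c ∨ y = c) := by
  simp [starAt]

lemma isUniversal_starAt (c : V) : (starAt c).IsUniversal c :=
  fun _ h => starAt_adj.mpr ⟨h, Or.inl rfl⟩

lemma nonempty_iso_starAt_iff [DecidableEq V] (G : SimpleGraph V) {c : V} :
    Nonempty (G ≃g starAt c) ↔ ∃ c', G = starAt c' := by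
  refine ⟨fun ⟨f⟩ => ⟨f.symm c, ?_⟩, fun ⟨c', hc'⟩ => ?_⟩
  · ext x y
    rw [← f.map_adj_iff, starAt_adj, starAt_adj, f.injective.ne_iff,
      ← f.eq_symm_apply, ← f.eq_symm_apply]
  · subst hc'
    refine ⟨⟨Equiv.swap c' c, fun {x y} => ?_⟩⟩
    simp only [starAt_adj, (Equiv.swap c' c).injective.ne_iff, Equiv.swap_apply_eq_iff,
      Equiv.swap_apply_right]

variable [Fintype V] [DecidableEq V] (G : SimpleGraph V) [DecidableRel G.Adj]

lemma adjMatrix_pow_three_apply {α : Type*} [Semiring α] (a b : V) :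
    (G.adjMatrix α ^ 3) a b =
      ∑ x ∈ G.neighborFinset a, ∑ y ∈ G.neighborFinset b, G.adjMatrix α x y := by
  rw [pow_succ, pow_two, mul_adjMatrix_apply]
  simp only [adjMatrix_mul_apply]
  exact sum_comm

omit [DecidableEq V] in
lemma sum_adjMatrix_apply (x : V) : ∑ y, G.adjMatrix ℝ x y = G.degree x := by
  simp [adjMatrix_apply, ← card_neighborFinset_eq_degree, neighborFinset_eq_filter]

lemma adjMatrix_pow_apply_nonneg (k : ℕ) (x y : V) : 0 ≤ (G.adjMatrix ℝ ^ k) x y := by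
  rw [adjMatrix_pow_apply_eq_card_walk]
  positivity

lemma exists_eigenvalues_sq_le_sum_degree (hA : (G.adjMatrix ℝ).IsHermitian) (i : V) :
    ∃ u, hA.eigenvalues i ^ 2 ≤ ∑ x ∈ G.neighborFinset u, (G.degree x : ℝ) := by
  have hμ : Module.End.HasEigenvalue (toLin' (G.adjMatrix ℝ ^ 2)) (hA.eigenvalues i ^ 2) := by
    rw [toLin'_pow]
    exact (hA.hasEigenvalue_eigenvalues i).pow 2
  obtain ⟨u, hu⟩ := exists_le_sum_row_of_hasEigenvalue (G.adjMatrix_pow_apply_nonneg 2) hμ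
  refine ⟨u, hu.trans_eq ?_⟩
  simp only [pow_two, adjMatrix_mul_apply]
  rw [sum_comm]
  exact sum_congr rfl fun x _ => G.sum_adjMatrix_apply x

lemma sum_eigenvalues_sq (hA : (G.adjMatrix ℝ).IsHermitian) :
    ∑ i, hA.eigenvalues i ^ 2 = ∑ x, (G.degree x : ℝ) := by
  have htrace := hA.trace_sq
  simp only [RCLike.ofReal_real_eq_id, id] at htrace
  rw [← htrace, pow_two, trace]
  exact sum_congr rfl fun x _ => G.adjMatrix_mul_self_apply_self x

lemma sum_degree_neighborFinset_add_le [Nontrivial V] (hG : G.Preconnected) (u : V) :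
    ∑ x ∈ G.neighborFinset u, G.degree x + (Fintype.card V - 1) ≤ ∑ x, G.degree x := by
  set s := univ \ G.neighborFinset u
  have hu : u ∈ s := by simp [s]
  have hsplit : ∑ x ∈ s, G.degree x + ∑ x ∈ G.neighborFinset u, G.degree x = ∑ x, G.degree x :=
    sum_sdiff (subset_univ _)
  have hs : ∑ x ∈ s, G.degree x = G.degree u + ∑ x ∈ s.erase u, G.degree x :=
    (add_sum_erase s _ hu).symm
  have hcard : #(s.erase u) = Fintype.card V - G.degree u - 1 := by
    rw [card_erase_of_mem hu, card_sdiff_of_subset (subset_univ _), card_univ,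
      card_neighborFinset_eq_degree]
  have hpos : #(s.erase u) ≤ ∑ x ∈ s.erase u, G.degree x := by
    simpa using card_nsmul_le_sum (s.erase u) (fun x => G.degree x) 1
      fun x _ => hG.degree_pos_of_nontrivial x
  have := G.degree_lt_card_verts u
  omega

lemma eigenvalues_sq_add_card_sub_one_le [Nontrivial V] (hG : G.Preconnected)
    (hA : (G.adjMatrix ℝ).IsHermitian) (i : V) :
    hA.eigenvalues i ^ 2 + ((Fintype.card V : ℝ) - 1) ≤ ∑ j, hA.eigenvalues j ^ 2 := by
  obtain ⟨u, hu⟩ := G.exists_eigenvalues_sq_le_sum_degree hA i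
  have h : ∑ x ∈ G.neighborFinset u, (G.degree x : ℝ) + ((Fintype.card V - 1 : ℕ) : ℝ)
      ≤ ∑ x, (G.degree x : ℝ) := by
    exact_mod_cast G.sum_degree_neighborFinset_add_le hG u
  rw [Nat.cast_pred Fintype.card_pos] at h
  rw [sum_eigenvalues_sq]
  linarith

lemma two_mul_card_sub_one_le_sum_eigenvalues_sq (hG : G.Connected)
    (hA : (G.adjMatrix ℝ).IsHermitian) :
    2 * ((Fintype.card V : ℝ) - 1) ≤ ∑ i, hA.eigenvalues i ^ 2 := by
  have hedges := hG.card_vert_le_card_edgeSet_add_one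
  rw [Nat.card_eq_fintype_card, Nat.card_eq_fintype_card, ← edgeFinset_card] at hedges
  rw [sum_eigenvalues_sq, ← Nat.cast_sum, sum_degrees_eq_twice_card_edges, Nat.cast_mul,
    Nat.cast_two]
  have : (Fintype.card V : ℝ) ≤ #G.edgeFinset + 1 := by exact_mod_cast hedges
  linarith

lemma adjMatrix_pow_three_apply_of_neighborFinset_eq {ℓ w : V} (h : G.neighborFinset ℓ = {w}) :
    (G.adjMatrix ℝ ^ 3) ℓ w = G.degree w := by
  rw [adjMatrix_pow_three_apply, h, sum_singleton, ← mul_adjMatrix_apply,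
    adjMatrix_mul_self_apply_self]

omit [DecidableEq V] in
lemma exists_degree_eq_one [Nontrivial V] (hG : G.Preconnected)
    (h : ∑ x, G.degree x < 2 * Fintype.card V) : ∃ v, G.degree v = 1 := by
  by_contra! hne
  have h2 : ∀ x ∈ univ, 2 ≤ G.degree x := fun x _ =>
    lt_of_le_of_ne (hG.degree_pos_of_nontrivial x) (hne x).symm
  have := card_nsmul_le_sum univ (fun x => G.degree x) 2 h2
  rw [smul_eq_mul, card_univ] at this
  omega

lemma eq_starAt_of_isUniversal {w : V} (hw : G.IsUniversal w)
    (hsum : ∑ x, G.degree x = 2 * (Fintype.card V - 1)) : G = starAt w := by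
  have hedges : G.incidenceFinset w = G.edgeFinset := by
    refine eq_of_subset_of_card_le (G.incidenceFinset_subset w) ?_
    rw [card_incidenceFinset_eq_degree, (G.degree_eq_card_sub_one w).mpr hw]
    have := G.sum_degrees_eq_twice_card_edges
    omega
  ext x y
  rw [starAt_adj]
  refine ⟨fun h => ⟨h.ne, ?_⟩, ?_⟩
  · have : s(x, y) ∈ G.incidenceFinset w := hedges ▸ G.mem_edgeFinset.mpr h
    rw [mem_incidenceFinset] at this
    exact (Sym2.mem_iff.mp this.2).imp Eq.symm Eq.symm
  · rintro ⟨hxy, rfl | rfl⟩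
    · exact hw hxy
    · exact (hw hxy.symm).symm

section starAt
variable {c : V} [DecidableRel (starAt c).Adj]

omit [DecidableEq V] in
lemma neighborFinset_starAt_of_ne {x : V} (hx : x ≠ c) : (starAt c).neighborFinset x = {c} := by
  ext y
  simp only [mem_neighborFinset, starAt_adj, mem_singleton]
  grind

lemma sum_degree_starAt : ∑ x, (starAt c).degree x = 2 * (Fintype.card V - 1) := by
  rw [← add_sum_erase _ _ (mem_univ c), (degree_eq_card_sub_one _ c).mpr (isUniversal_starAt c),
    sum_congr rfl fun x hx => by
      rw [← card_neighborFinset_eq_degree, neighborFinset_starAt_of_ne (ne_of_mem_erase hx),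
        card_singleton],
    sum_const, card_erase_of_mem (mem_univ c), card_univ, smul_eq_mul, mul_one]
  ring

lemma adjMatrix_starAt_pow_three :
    (starAt c).adjMatrix ℝ ^ 3 = ((Fintype.card V : ℝ) - 1) • (starAt c).adjMatrix ℝ := by
  ext a b
  rw [adjMatrix_pow_three_apply, Matrix.smul_apply]
  have hc : (starAt c).neighborFinset c = univ.erase c :=
    (neighborFinset_eq_erase_univ _ c).mpr (isUniversal_starAt c)
  have hsum_leaves (f : V → ℝ) (hf : ∀ x, x ≠ c → f x = 1) :
      ∑ x ∈ univ.erase c, f x = (Fintype.card V : ℝ) - 1 := by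
    rw [sum_congr rfl fun x hx => hf x (ne_of_mem_erase hx), sum_const, nsmul_one,
      card_erase_of_mem (mem_univ c), card_univ, Nat.cast_pred (Fintype.card_pos_iff.mpr ⟨c⟩)]
  by_cases ha : a = c <;> by_cases hb : b = c
  · subst ha hb
    rw [hc, adjMatrix_apply, if_neg ((starAt b).loopless.irrefl b), smul_zero]
    exact sum_eq_zero fun x hx => sum_eq_zero fun y hy => by
      simp [starAt_adj, ne_of_mem_erase hx, ne_of_mem_erase hy]
  · subst ha
    rw [hc, neighborFinset_starAt_of_ne hb]
    simp only [sum_singleton]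
    rw [hsum_leaves _ fun x hx => by simp [starAt_adj, hx]]
    simp [starAt_adj, Ne.symm hb]
  · subst hb
    rw [hc, neighborFinset_starAt_of_ne ha, sum_singleton,
      hsum_leaves _ fun x hx => by simp [starAt_adj, Ne.symm hx]]
    simp [starAt_adj, ha]
  · rw [neighborFinset_starAt_of_ne ha, neighborFinset_starAt_of_ne hb]
    simp [starAt_adj, ha, hb]

end starAt

theorem exists_eq_starAt_iff [Nontrivial V] (hG : G.Connected) :
    (∃ c, G = starAt c) ↔ G.adjMatrix ℝ ^ 3 = ((Fintype.card V : ℝ) - 1) • G.adjMatrix ℝ ∧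
      ∑ x, G.degree x = 2 * (Fintype.card V - 1) := by
  refine ⟨fun ⟨c, hc⟩ => ?_, fun ⟨h3, hsum⟩ => ?_⟩
  · subst hc
    exact ⟨adjMatrix_starAt_pow_three, sum_degree_starAt⟩
  have hcard := Fintype.card_pos (α := V)
  obtain ⟨ℓ, hℓ⟩ := G.exists_degree_eq_one hG.preconnected (by omega)
  obtain ⟨w, hw⟩ := card_eq_one.mp ((G.card_neighborFinset_eq_degree ℓ).trans hℓ)
  have hdeg : (G.degree w : ℝ) = ((Fintype.card V - 1 : ℕ) : ℝ) := by
    have hℓw : G.Adj ℓ w := (G.mem_neighborFinset ℓ w).mp (hw ▸ mem_singleton_self w)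
    rw [← G.adjMatrix_pow_three_apply_of_neighborFinset_eq hw, h3, Matrix.smul_apply,
      adjMatrix_apply, if_pos hℓw, smul_eq_mul, mul_one, Nat.cast_pred hcard]
  exact ⟨w, G.eq_starAt_of_isUniversal ((degree_eq_card_sub_one G w).mp (by exact_mod_cast hdeg))
    hsum⟩

theorem exists_eq_starAt_iff_eigenvalues [Nontrivial V] (hG : G.Connected)
    (hA : (G.adjMatrix ℝ).IsHermitian) :
    (∃ c, G = starAt c) ↔
      (∀ i, hA.eigenvalues i ^ 2 = 0 ∨ hA.eigenvalues i ^ 2 = (Fintype.card V : ℝ) - 1) ∧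
        ∑ i, hA.eigenvalues i ^ 2 = 2 * ((Fintype.card V : ℝ) - 1) := by
  have hcast : ((2 * (Fintype.card V - 1) : ℕ) : ℝ) = 2 * ((Fintype.card V : ℝ) - 1) := by
    rw [Nat.cast_mul, Nat.cast_pred Fintype.card_pos, Nat.cast_two]
  rw [G.exists_eq_starAt_iff hG, hA.pow_three_eq_smul_iff, sum_eigenvalues_sq, ← hcast,
    ← Nat.cast_sum, Nat.cast_inj]
  simp only [pow_three_eq_mul_iff]

end SimpleGraph

lemma starGraph_eq_starAt (n : ℕ) [NeZero n] : starGraph n = SimpleGraph.starAt 0 := by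
  ext u v
  simp only [starGraph, SimpleGraph.starAt_adj, Fin.val_eq_zero_iff]
  exact and_comm

/-- For a connected graph `G` on `n ≥ 2` vertices and `0 < p < 2`, the `p`-energy of `G`
equals `2(n-1)^(p/2) = E_p(Sₙ)` if and only if `G` is isomorphic to the star `Sₙ`. -/
theorem pEnergy_eq_star_iff {n : ℕ} (hn : 2 ≤ n) (G : SimpleGraph (Fin n)) [DecidableRel G.Adj]
    (hG : G.Connected) (p : ℝ) (hp0 : 0 < p) (hp2 : p < 2) :
    pEnergy G p = 2 * ((n : ℝ) - 1) ^ (p / 2) ↔ Nonempty (G ≃g starGraph n) := by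
  have : Nontrivial (Fin n) := Fin.nontrivial_iff_two_le.mpr hn
  have : NeZero n := ⟨by omega⟩
  have hA : (G.adjMatrix ℝ).IsHermitian :=
    (conjTranspose_eq_transpose_of_trivial _).trans G.isSymm_adjMatrix
  have hcard : (Fintype.card (Fin n) : ℝ) = n := by simp
  have hc : (0 : ℝ) < n - 1 := by
    have : (2 : ℝ) ≤ n := by exact_mod_cast hn
    linarith
  have hpE : pEnergy G p = ∑ i, (hA.eigenvalues i ^ 2) ^ (p / 2) :=
    sum_congr rfl fun i _ => Real.abs_rpow_eq_sq_rpow _ p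
  rw [hpE, Real.sum_rpow_eq_two_mul_rpow_iff (by positivity) (by linarith) hc
    (fun i => sq_nonneg _) (hcard ▸ G.two_mul_card_sub_one_le_sum_eigenvalues_sq hG hA)
    (hcard ▸ G.eigenvalues_sq_add_card_sub_one_le hG.preconnected hA), ← hcard,
    ← G.exists_eq_starAt_iff_eigenvalues hG hA, starGraph_eq_starAt, G.nonempty_iso_starAt_iff]
end

section
/- Let G be a connected simple graph with m edges and n ≥ 2 vertices. Then E_4(G) ≤ 2m·(2m − n + 1), with equality if and only if G is isomorphic to the star graph S_n. -/
/-!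
Write `c(u, v) = |N(u) ∩ N(v)| = (A²)ᵤᵥ`, so that `E₄(G) = tr A⁴ = ∑ᵤ ∑ᵥ c(u, v)²`.
For fixed `u` we have `c(u, v) ≤ d(u)` and `∑ᵥ c(u, v) = ∑_{w ∼ u} d(w)`, hence
`∑ᵥ c(u, v)² ≤ d(u) ∑_{w ∼ u} d(w)`. In a connected graph every degree is at least `1`, so the
`n - 1 - d(u)` vertices outside the closed neighbourhood of `u` carry degree at least
`n - 1 - d(u)`, and `∑_{w ∼ u} d(w) ≤ 2m - d(u) - (n - 1 - d(u)) = 2m - n + 1`.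
Summing `d(u) (2m - n + 1)` over `u` gives the bound.

Equality forces, at every `u`, each `c(u, v)` to be `0` or `d(u)`, and every non-neighbour of `u`
to be a leaf. By the second condition a vertex of degree at least `2` is adjacent to all others
(if there is none, all degrees are `1` and `n ≤ m + 1 = n / 2 + 1` gives `n = 2`). For such a
centre `c` and `v ≠ c` we have `c(v, c) = d(v) - 1`, so the first condition makes `v` a leaf.
-/

open Finset MeasureTheory

theorem Finset.sum_sq_le_mul_sum {ι : Type*} {s : Finset ι} {f : ι → ℕ} {D : ℕ}
    (h : ∀ i ∈ s, f i ≤ D) : ∑ i ∈ s, f i ^ 2 ≤ D * ∑ i ∈ s, f i := by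
  rw [mul_sum]
  exact sum_le_sum fun i hi => by rw [sq]; exact Nat.mul_le_mul_right _ (h i hi)

theorem Finset.sum_sq_eq_mul_sum_iff {ι : Type*} {s : Finset ι} {f : ι → ℕ} {D : ℕ}
    (h : ∀ i ∈ s, f i ≤ D) :
    ∑ i ∈ s, f i ^ 2 = D * ∑ i ∈ s, f i ↔ ∀ i ∈ s, f i = 0 ∨ f i = D := by
  rw [mul_sum, sum_eq_sum_iff_of_le fun i hi => by rw [sq]; exact Nat.mul_le_mul_right _ (h i hi)]
  refine forall₂_congr fun i _ => ?_
  rw [sq, mul_eq_mul_right_iff, or_comm]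

theorem Finset.card_le_sum_of_one_le {ι : Type*} {s : Finset ι} {f : ι → ℕ}
    (h : ∀ i ∈ s, 1 ≤ f i) : #s ≤ ∑ i ∈ s, f i := by
  simpa using card_nsmul_le_sum s f 1 h

theorem Finset.sum_eq_card_iff_of_one_le {ι : Type*} {s : Finset ι} {f : ι → ℕ}
    (h : ∀ i ∈ s, 1 ≤ f i) : ∑ i ∈ s, f i = #s ↔ ∀ i ∈ s, f i = 1 := by
  rw [card_eq_sum_ones, eq_comm, sum_eq_sum_iff_of_le h]
  exact forall₂_congr fun _ _ => eq_comm

theorem Matrix.IsHermitian.trace_pow {𝕜 n : Type*} [RCLike 𝕜] [Fintype n] [DecidableEq n]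
    {A : Matrix n n 𝕜} (hA : A.IsHermitian) (k : ℕ) :
    (A ^ k).trace = ∑ i, (hA.eigenvalues i : 𝕜) ^ k := by
  conv_lhs => rw [hA.spectral_theorem, ← map_pow, Unitary.conjStarAlgAut_apply,
    Matrix.trace_mul_cycle, Unitary.coe_star_mul_self, Matrix.one_mul, Matrix.diagonal_pow,
    Matrix.trace_diagonal]
  rfl

namespace SimpleGraph

variable {V W : Type*} {G : SimpleGraph V} {H : SimpleGraph W} {c : V}

section Counting

variable [Fintype V] [DecidableEq V] [DecidableRel G.Adj]

variable (G) in
def NonAdjLeaves (u : V) : Prop :=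
  ∀ w, w ≠ u → ¬G.Adj u w → G.degree w = 1

variable (G) in
def CommonNeighborsDichotomy (u : V) : Prop :=
  ∀ v, #(G.neighborFinset u ∩ G.neighborFinset v) = 0 ∨
    #(G.neighborFinset u ∩ G.neighborFinset v) = G.degree u

theorem adjMatrix_mul_self_apply {α : Type*} [NonAssocSemiring α] (u v : V) :
    (G.adjMatrix α * G.adjMatrix α) u v = #(G.neighborFinset u ∩ G.neighborFinset v) := by
  rw [adjMatrix_mul_apply, ← filter_mem_eq_inter, card_filter, Nat.cast_sum]
  refine sum_congr rfl fun w _ => ?_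
  simp [adjMatrix_apply, mem_neighborFinset, adj_comm]

theorem sum_card_neighborFinset_inter (u : V) :
    ∑ v, #(G.neighborFinset u ∩ G.neighborFinset v) = ∑ w ∈ G.neighborFinset u, G.degree w := by
  simp_rw [← filter_mem_eq_inter, card_filter]
  rw [sum_comm]
  refine sum_congr rfl fun w _ => ?_
  simp [adj_comm, ← card_neighborFinset_eq_degree, neighborFinset_eq_filter]

theorem card_neighborFinset_inter_le_degree (u v : V) :
    #(G.neighborFinset u ∩ G.neighborFinset v) ≤ G.degree u :=
  (card_le_card inter_subset_left).trans (card_neighborFinset_eq_degree G u).le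

theorem sum_sq_card_neighborFinset_inter_le (u : V) :
    ∑ v, #(G.neighborFinset u ∩ G.neighborFinset v) ^ 2 ≤
      G.degree u * ∑ w ∈ G.neighborFinset u, G.degree w := by
  rw [← sum_card_neighborFinset_inter]
  exact sum_sq_le_mul_sum fun v _ => card_neighborFinset_inter_le_degree u v

theorem sum_sq_card_neighborFinset_inter_eq_iff (u : V) :
    ∑ v, #(G.neighborFinset u ∩ G.neighborFinset v) ^ 2 =
      G.degree u * ∑ w ∈ G.neighborFinset u, G.degree w ↔ G.CommonNeighborsDichotomy u := by
  rw [← sum_card_neighborFinset_inter,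
    sum_sq_eq_mul_sum_iff fun v _ => card_neighborFinset_inter_le_degree u v]
  simp [CommonNeighborsDichotomy]

theorem sum_degree_neighborFinset_add_card_add_sum_degree (u : V) :
    ∑ w ∈ G.neighborFinset u, G.degree w + Fintype.card V +
        ∑ w ∈ (insert u (G.neighborFinset u))ᶜ, G.degree w =
      2 * #G.edgeFinset + 1 + #(insert u (G.neighborFinset u))ᶜ := by
  have hu : u ∉ G.neighborFinset u := G.notMem_neighborFinset_self u
  have hdeg := G.sum_degrees_eq_twice_card_edges
  rw [← sum_add_sum_compl (insert u (G.neighborFinset u)), sum_insert hu] at hdeg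
  have hcard := card_compl (insert u (G.neighborFinset u))
  have hle := card_le_univ (insert u (G.neighborFinset u))
  rw [card_insert_of_notMem hu, card_neighborFinset_eq_degree] at hcard hle
  omega

theorem sum_degree_neighborFinset_add_card_le (hd : ∀ v, 0 < G.degree v) (u : V) :
    ∑ w ∈ G.neighborFinset u, G.degree w + Fintype.card V ≤ 2 * #G.edgeFinset + 1 := by
  have := G.sum_degree_neighborFinset_add_card_add_sum_degree u
  have := card_le_sum_of_one_le fun w (_ : w ∈ (insert u (G.neighborFinset u))ᶜ) => hd w
  omega

theorem sum_degree_neighborFinset_add_card_eq_iff (hd : ∀ v, 0 < G.degree v) (u : V) :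
    ∑ w ∈ G.neighborFinset u, G.degree w + Fintype.card V = 2 * #G.edgeFinset + 1 ↔
      G.NonAdjLeaves u := by
  have := G.sum_degree_neighborFinset_add_card_add_sum_degree u
  have hleaves := sum_eq_card_iff_of_one_le
    fun w (_ : w ∈ (insert u (G.neighborFinset u))ᶜ) => hd w
  have : ∑ w ∈ G.neighborFinset u, G.degree w + Fintype.card V = 2 * #G.edgeFinset + 1 ↔
      ∑ w ∈ (insert u (G.neighborFinset u))ᶜ, G.degree w = #(insert u (G.neighborFinset u))ᶜ := by
    omega
  rw [this, hleaves, NonAdjLeaves]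
  simp [mem_neighborFinset, and_imp]

theorem sum_sq_card_neighborFinset_inter_add_le (hd : ∀ v, 0 < G.degree v) (u : V) :
    ∑ v, #(G.neighborFinset u ∩ G.neighborFinset v) ^ 2 + G.degree u * Fintype.card V ≤
      G.degree u * (2 * #G.edgeFinset + 1) :=
  calc _ ≤ G.degree u * ∑ w ∈ G.neighborFinset u, G.degree w + G.degree u * Fintype.card V :=
        Nat.add_le_add_right (sum_sq_card_neighborFinset_inter_le u) _
    _ = G.degree u * (∑ w ∈ G.neighborFinset u, G.degree w + Fintype.card V) := by ring
    _ ≤ _ := Nat.mul_le_mul_left _ (sum_degree_neighborFinset_add_card_le hd u)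

theorem sum_sq_card_neighborFinset_inter_add_eq_iff (hd : ∀ v, 0 < G.degree v) (u : V) :
    ∑ v, #(G.neighborFinset u ∩ G.neighborFinset v) ^ 2 + G.degree u * Fintype.card V =
      G.degree u * (2 * #G.edgeFinset + 1) ↔
        G.NonAdjLeaves u ∧ G.CommonNeighborsDichotomy u := by
  rw [← sum_degree_neighborFinset_add_card_eq_iff hd, ← sum_sq_card_neighborFinset_inter_eq_iff,
    and_comm]
  have h₁ := sum_sq_card_neighborFinset_inter_le (G := G) u
  have h₂ := Nat.mul_le_mul_left (G.degree u) (sum_degree_neighborFinset_add_card_le hd u)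
  set S := ∑ w ∈ G.neighborFinset u, G.degree w
  rw [mul_add] at h₂
  constructor
  · intro h
    have hS : S + Fintype.card V = 2 * #G.edgeFinset + 1 := by
      refine Nat.eq_of_mul_eq_mul_left (hd u) ?_
      rw [mul_add]; omega
    refine ⟨?_, hS⟩
    rw [← hS, mul_add] at h; omega
  · rintro ⟨h₃, h₄⟩
    rw [h₃, ← h₄, mul_add]

theorem sum_sum_sq_card_neighborFinset_inter_add_le (hd : ∀ v, 0 < G.degree v) :
    ∑ u, ∑ v, #(G.neighborFinset u ∩ G.neighborFinset v) ^ 2 +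
        2 * #G.edgeFinset * Fintype.card V ≤ 2 * #G.edgeFinset * (2 * #G.edgeFinset + 1) := by
  have h := sum_le_sum fun u (_ : u ∈ univ) => sum_sq_card_neighborFinset_inter_add_le hd u
  rwa [sum_add_distrib, ← sum_mul, ← sum_mul, sum_degrees_eq_twice_card_edges] at h

theorem sum_sum_sq_card_neighborFinset_inter_add_eq_iff (hd : ∀ v, 0 < G.degree v) :
    ∑ u, ∑ v, #(G.neighborFinset u ∩ G.neighborFinset v) ^ 2 +
        2 * #G.edgeFinset * Fintype.card V = 2 * #G.edgeFinset * (2 * #G.edgeFinset + 1) ↔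
      ∀ u, G.NonAdjLeaves u ∧ G.CommonNeighborsDichotomy u := by
  have h := sum_eq_sum_iff_of_le fun u (_ : u ∈ univ) =>
    sum_sq_card_neighborFinset_inter_add_le hd u
  rw [sum_add_distrib, ← sum_mul, ← sum_mul, sum_degrees_eq_twice_card_edges] at h
  simp only [h, mem_univ, true_implies, sum_sq_card_neighborFinset_inter_add_eq_iff hd]

end Counting

variable (G) in
def IsStarWithCenter (c : V) : Prop :=
  ∀ u v, G.Adj u v ↔ (u = c ∨ v = c) ∧ u ≠ v

theorem IsStarWithCenter.of_iso {d : W} (h : H.IsStarWithCenter d) (f : G ≃g H) :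
    G.IsStarWithCenter (f.symm d) := by
  intro u v
  rw [← f.map_adj_iff, h, f.injective.ne_iff, ← f.eq_symm_apply, ← f.eq_symm_apply]

def IsStarWithCenter.iso {d : W} (hG : G.IsStarWithCenter c) (hH : H.IsStarWithCenter d)
    (e : V ≃ W) (he : e c = d) : G ≃g H :=
  ⟨e, fun {u v} => by rw [hH, hG, ← he, e.injective.eq_iff, e.injective.eq_iff, e.injective.ne_iff]⟩

section Extremal

variable [Fintype V] [DecidableRel G.Adj]

theorem NonAdjLeaves.adj_of_two_le_degree {u w : V} (h : G.NonAdjLeaves u) (hwu : w ≠ u)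
    (hw : 2 ≤ G.degree w) : G.Adj u w := by
  by_contra huw
  have := h w hwu huw
  omega

theorem Connected.exists_forall_adj [Nontrivial V] (hG : G.Connected)
    (h : ∀ u, G.NonAdjLeaves u) : ∃ c, ∀ v, v ≠ c → G.Adj c v := by
  by_cases hw : ∃ w, 2 ≤ G.degree w
  · obtain ⟨w, hw⟩ := hw
    exact ⟨w, fun v hv => ((h v).adj_of_two_le_degree hv.symm hw).symm⟩
  push Not at hw
  have hdeg : ∀ v, G.degree v = 1 := fun v => by
    have := hG.preconnected.degree_pos_of_nontrivial v
    have := hw v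
    omega
  have hcard : Fintype.card V ≤ 2 := by
    have hV := hG.card_vert_le_card_edgeSet_add_one
    have hE := G.sum_degrees_eq_twice_card_edges
    simp only [hdeg, sum_const, smul_eq_mul, mul_one, card_univ] at hE
    rw [Nat.card_eq_fintype_card, Nat.card_eq_fintype_card, ← edgeFinset_card] at hV
    omega
  obtain ⟨c⟩ := (inferInstance : Nonempty V)
  obtain ⟨x, hx⟩ := (G.degree_pos_iff_exists_adj c).mp (by rw [hdeg c]; omega)
  refine ⟨c, fun v hv => ?_⟩
  by_contra hcv
  have hvx : v ≠ x := by rintro rfl; exact hcv hx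
  have := Fintype.two_lt_card_iff.mpr ⟨c, x, v, hx.ne, hv.symm, hvx.symm⟩
  omega

theorem isStarWithCenter_of_forall_adj (hc : ∀ w, w ≠ c → G.Adj c w)
    (hdeg : ∀ v, v ≠ c → G.degree v = 1) : G.IsStarWithCenter c := by
  refine fun u v => ⟨fun huv => ⟨?_, huv.ne⟩, ?_⟩
  · by_contra! hne
    have : #(G.neighborFinset u) ≤ 1 := by rw [card_neighborFinset_eq_degree, hdeg u hne.1]
    exact hne.2 (card_le_one.mp this v ((mem_neighborFinset _ _ _).mpr huv) c
      ((mem_neighborFinset _ _ _).mpr (hc u hne.1).symm))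
  · rintro ⟨rfl | rfl, hne⟩
    exacts [hc v hne.symm, (hc u hne).symm]

theorem IsStarWithCenter.neighborFinset_of_ne (h : G.IsStarWithCenter c) {v : V} (hv : v ≠ c) :
    G.neighborFinset v = {c} := by
  ext w
  simp only [mem_neighborFinset, h v w, hv, false_or, mem_singleton, and_iff_left_iff_imp]
  rintro rfl
  exact hv

theorem IsStarWithCenter.degree_of_ne (h : G.IsStarWithCenter c) {v : V} (hv : v ≠ c) :
    G.degree v = 1 := by
  rw [← card_neighborFinset_eq_degree, h.neighborFinset_of_ne hv, card_singleton]

theorem IsStarWithCenter.nonAdjLeaves (h : G.IsStarWithCenter c) (u : V) : G.NonAdjLeaves u := by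
  intro w hwu huw
  refine h.degree_of_ne fun hwc => huw ?_
  exact (h u w).mpr ⟨Or.inr hwc, hwu.symm⟩

variable [DecidableEq V]

theorem CommonNeighborsDichotomy.degree_eq_one {v : V} (hb : G.CommonNeighborsDichotomy v)
    (hc : ∀ w, w ≠ c → G.Adj c w) (hv : v ≠ c) : G.degree v = 1 := by
  have hcv : c ∈ G.neighborFinset v := (mem_neighborFinset _ _ _).mpr (hc v hv).symm
  have hinter : G.neighborFinset v ∩ G.neighborFinset c = (G.neighborFinset v).erase c := by
    ext w
    simp only [mem_inter, mem_erase, mem_neighborFinset]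
    exact ⟨fun ⟨hvw, hcw⟩ => ⟨hcw.ne', hvw⟩, fun ⟨hwc, hvw⟩ => ⟨hvw, hc w hwc⟩⟩
  have := card_erase_of_mem hcv
  have := card_pos.mpr ⟨c, hcv⟩
  rw [← hinter, card_neighborFinset_eq_degree] at *
  rcases hb c with h | h <;> omega

theorem IsStarWithCenter.commonNeighborsDichotomy (h : G.IsStarWithCenter c) (u : V) :
    G.CommonNeighborsDichotomy u := by
  intro v
  by_cases hu : u = c
  · subst hu
    by_cases hv : v = u
    · subst hv
      rw [inter_self, card_neighborFinset_eq_degree]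
      exact Or.inr rfl
    · left
      rw [h.neighborFinset_of_ne hv, card_eq_zero, inter_singleton_of_notMem]
      exact G.notMem_neighborFinset_self u
  · have := card_neighborFinset_inter_le_degree (G := G) u v
    rw [h.degree_of_ne hu] at this ⊢
    omega

theorem Connected.forall_iff_exists_isStarWithCenter [Nontrivial V] (hG : G.Connected) :
    (∀ u, G.NonAdjLeaves u ∧ G.CommonNeighborsDichotomy u) ↔ ∃ c, G.IsStarWithCenter c := by
  refine ⟨fun h => ?_, fun ⟨c, hc⟩ u => ⟨hc.nonAdjLeaves u, hc.commonNeighborsDichotomy u⟩⟩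
  obtain ⟨c, hc⟩ := hG.exists_forall_adj fun u => (h u).1
  exact ⟨c, isStarWithCenter_of_forall_adj hc fun v hv => (h v).2.degree_eq_one hc hv⟩

end Extremal

end SimpleGraph

theorem sum_adjEigenvalues_pow_four {n : ℕ} (G : SimpleGraph (Fin n)) [DecidableRel G.Adj] :
    ∑ i, adjEigenvalues G i ^ 4 =
      ((∑ u, ∑ v, #(G.neighborFinset u ∩ G.neighborFinset v) ^ 2 : ℕ) : ℝ) := by
  have h := Matrix.IsHermitian.trace_pow
    ((Matrix.conjTranspose_eq_transpose_of_trivial (G.adjMatrix ℝ)).trans G.isSymm_adjMatrix) 4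
  simp only [RCLike.ofReal_real_eq_id, id] at h
  rw [adjEigenvalues, ← h, show 4 = 2 + 2 from rfl, pow_add, sq, Matrix.trace]
  push_cast
  refine sum_congr rfl fun u _ => ?_
  rw [Matrix.diag_apply, Matrix.mul_apply]
  refine sum_congr rfl fun v _ => ?_
  rw [SimpleGraph.adjMatrix_mul_self_apply, SimpleGraph.adjMatrix_mul_self_apply, inter_comm, sq]

theorem isStarWithCenter_starGraph {n : ℕ} (hn : 0 < n) :
    (starGraph n).IsStarWithCenter ⟨0, hn⟩ := fun u v => by
  simp [starGraph, Fin.ext_iff]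

theorem nonempty_iso_starGraph_iff {n : ℕ} (hn : 0 < n) (G : SimpleGraph (Fin n)) :
    Nonempty (G ≃g starGraph n) ↔ ∃ c, G.IsStarWithCenter c :=
  ⟨fun ⟨f⟩ => ⟨_, (isStarWithCenter_starGraph hn).of_iso f⟩, fun ⟨c, hc⟩ =>
    ⟨hc.iso (isStarWithCenter_starGraph hn) (Equiv.swap c _) (Equiv.swap_apply_left _ _)⟩⟩

/-- For a connected graph with `m` edges and `n ≥ 2` vertices,
`E₄(G) ≤ 2m(2m - n + 1)`, with equality iff `G` is isomorphic to the star `Sₙ`. -/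
theorem fourEnergy_le {n m : ℕ} (hn : 2 ≤ n) (G : SimpleGraph (Fin n)) [DecidableRel G.Adj]
    (hG : G.Connected) (hm : G.edgeFinset.card = m) :
    (∑ i, adjEigenvalues G i ^ 4) ≤ 2 * m * (2 * (m : ℝ) - n + 1) ∧
      ((∑ i, adjEigenvalues G i ^ 4) = 2 * m * (2 * (m : ℝ) - n + 1) ↔
        Nonempty (G ≃g starGraph n)) := by
  subst hm
  have : Nontrivial (Fin n) := Fin.nontrivial_iff_two_le.mpr hn
  have hd v := hG.preconnected.degree_pos_of_nontrivial v
  have hle := Nat.cast_le (α := ℝ) |>.mpr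
    (SimpleGraph.sum_sum_sq_card_neighborFinset_inter_add_le hd)
  rw [sum_adjEigenvalues_pow_four, nonempty_iso_starGraph_iff (by omega),
    ← hG.forall_iff_exists_isStarWithCenter,
    ← SimpleGraph.sum_sum_sq_card_neighborFinset_inter_add_eq_iff hd, ← Nat.cast_inj (R := ℝ)]
  rw [Fintype.card_fin] at hle ⊢
  push_cast at hle ⊢
  exact ⟨by linarith, ⟨fun h => by linarith, fun h => by linarith⟩⟩
end

section
/- Let G be a connected simple graph with m edges and n vertices, and let λ_1, …, λ_n be the eigenvalues of its adjacency matrix. Then ∑_{1 ≤ i < j ≤ n} λ_i²·λ_j² ≥ m(n−1), and consequently ∑_{1 ≤ i < j ≤ n} λ_i²·λ_j² ≥ (n−1)². -/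
open Finset MeasureTheory

/-!
Put `aᵢ = λᵢ²`. Then `∑ aᵢ = tr A² = 2m` and `2 ∑_{i<j} aᵢ aⱼ = (∑ aᵢ)² - ∑ aᵢ² ≥ 2m (2m - max aᵢ)`,
so it suffices to know Hong's bound `λᵢ² ≤ 2m - n + 1`. By Gershgorin, `λᵢ²`, an eigenvalue of the
nonnegative matrix `A²`, is at most some row sum `∑_{w ∼ v} deg w` of `A²`; in the degree sum
`2m = ∑_w deg w`, the vertices outside the neighbourhood of `v` contribute `deg v` for `v` itself and
at least `1` for each of the other `n - 1 - deg v`, none of which is isolated in a connected graph.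
The second inequality follows from `m ≥ n - 1`.
-/

open Matrix Module.End

theorem Finset.two_mul_sum_sum_Ioi_mul {ι R : Type*} [CommRing R] [LinearOrder ι] [Fintype ι]
    [LocallyFiniteOrderTop ι] [LocallyFiniteOrderBot ι] (f : ι → R) :
    2 * ∑ i, ∑ j ∈ Ioi i, f i * f j = (∑ i, f i) ^ 2 - ∑ i, f i ^ 2 := by
  classical
  have hrow (i : ι) : ∑ j ∈ {i}ᶜ, f j * f i = (∑ j, f j) * f i - f i ^ 2 := by
    rw [← sum_mul, ← sum_compl_add_sum {i} f, sum_singleton]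
    ring
  calc 2 * ∑ i, ∑ j ∈ Ioi i, f i * f j = ∑ i, ∑ j ∈ Ioi i, (f j * f i + f i * f j) := by
        simp only [mul_sum, two_mul, mul_comm (f _) (f _)]
    _ = ∑ i, ((∑ j, f j) * f i - f i ^ 2) := by
        rw [sum_sum_Ioi_add_eq_sum_sum_off_diag fun i j => f i * f j]
        exact sum_congr rfl fun i _ => hrow i
    _ = (∑ i, f i) ^ 2 - ∑ i, f i ^ 2 := by rw [sum_sub_distrib, ← mul_sum, sq]

theorem Finset.sum_mul_sub_le_two_mul_sum_sum_Ioi_mul {ι R : Type*} [CommRing R] [LinearOrder R]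
    [IsStrictOrderedRing R] [LinearOrder ι] [Fintype ι] [LocallyFiniteOrderTop ι]
    [LocallyFiniteOrderBot ι] {a : ι → R} {B : R} (ha : ∀ i, 0 ≤ a i) (hB : ∀ i, a i ≤ B) :
    (∑ i, a i) * (∑ i, a i - B) ≤ 2 * ∑ i, ∑ j ∈ Ioi i, a i * a j := by
  have hsq : ∑ i, a i ^ 2 ≤ B * ∑ i, a i := by
    rw [mul_sum]
    exact sum_le_sum fun i _ => by rw [sq]; exact mul_le_mul_of_nonneg_right (hB i) (ha i)
  rw [two_mul_sum_sum_Ioi_mul]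
  linear_combination hsq

namespace Matrix

theorem IsHermitian.trace_pow_eq_sum_eigenvalues_pow {𝕜 n : Type*} [RCLike 𝕜] [Fintype n]
    [DecidableEq n] {A : Matrix n n 𝕜} (hA : A.IsHermitian) (k : ℕ) :
    (A ^ k).trace = ∑ i, (hA.eigenvalues i : 𝕜) ^ k := by
  conv_lhs => rw [hA.spectral_theorem, ← map_pow, Unitary.conjStarAlgAut_apply, trace_mul_cycle,
    Unitary.coe_star_mul_self, one_mul, diagonal_pow, trace_diagonal]
  rfl

theorem IsHermitian.hasEigenvalue_toLin'_eigenvalues {𝕜 n : Type*} [RCLike 𝕜] [Fintype n]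
    [DecidableEq n] {A : Matrix n n 𝕜} (hA : A.IsHermitian) (i : n) :
    HasEigenvalue (toLin' A) (hA.eigenvalues i) := by
  refine hasEigenvalue_of_hasEigenvector (x := hA.eigenvectorBasis i) ⟨?_, ?_⟩
  · rw [mem_eigenspace_iff, toLin'_apply, hA.mulVec_eigenvectorBasis,
      RCLike.real_smul_eq_coe_smul (K := 𝕜)]
  · exact fun h => hA.eigenvectorBasis.orthonormal.ne_zero i (by ext j; exact congrFun h j)

theorem exists_norm_le_sum_norm_of_hasEigenvalue {K n : Type*} [NormedField K] [Fintype n]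
    [DecidableEq n] {A : Matrix n n K} {μ : K} (hμ : HasEigenvalue (toLin' A) μ) :
    ∃ k, ‖μ‖ ≤ ∑ j, ‖A k j‖ := by
  obtain ⟨k, hk⟩ := eigenvalue_mem_ball hμ
  refine ⟨k, ?_⟩
  rw [← add_sum_erase _ _ (mem_univ k)]
  calc ‖μ‖ ≤ ‖A k k‖ + ‖μ - A k k‖ := norm_le_norm_add_norm_sub' μ (A k k)
    _ ≤ _ := by gcongr; rwa [← dist_eq_norm, ← Metric.mem_closedBall]

end Matrix

namespace SimpleGraph

section

variable {V : Type*} [Fintype V] (G : SimpleGraph V) [DecidableRel G.Adj]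

theorem trace_adjMatrix_sq [DecidableEq V] {R : Type*} [Semiring R] :
    (G.adjMatrix R ^ 2).trace = 2 * #G.edgeFinset := by
  simp only [trace, sq, Matrix.diag, adjMatrix_mul_self_apply_self]
  rw [← Nat.cast_sum, sum_degrees_eq_twice_card_edges, Nat.cast_mul, Nat.cast_two]

theorem sum_adjMatrix_sq_apply [DecidableEq V] {R : Type*} [Semiring R] (v : V) :
    ∑ u, (G.adjMatrix R ^ 2) v u = ∑ w ∈ G.neighborFinset v, (G.degree w : R) := by
  have hdeg (w : V) : (G.adjMatrix R *ᵥ 1) w = G.degree w := by simp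
  have hrow : ∑ u, (G.adjMatrix R ^ 2) v u = (G.adjMatrix R ^ 2 *ᵥ 1) v := by
    simp [mulVec, dotProduct]
  rw [hrow, sq, ← mulVec_mulVec, adjMatrix_mulVec_apply]
  exact sum_congr rfl fun w _ => hdeg w

theorem sum_degree_neighborFinset_add_card_sub_one_le [DecidableEq V] (v : V)
    (hdeg : ∀ w ≠ v, 0 < G.degree w) :
    ∑ w ∈ G.neighborFinset v, G.degree w + (Fintype.card V - 1) ≤ 2 * #G.edgeFinset := by
  have hv : v ∈ (G.neighborFinset v)ᶜ := by simp
  have hrest := card_nsmul_le_sum (((G.neighborFinset v)ᶜ).erase v) (fun w => G.degree w) 1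
    fun w hw => hdeg w (ne_of_mem_erase hw)
  rw [smul_eq_mul, mul_one] at hrest
  have hcard : #(((G.neighborFinset v)ᶜ).erase v) = Fintype.card V - G.degree v - 1 := by
    rw [card_erase_of_mem hv, card_compl, card_neighborFinset_eq_degree]
  have hlt := G.degree_lt_card_verts v
  rw [← sum_degrees_eq_twice_card_edges, ← sum_add_sum_compl (G.neighborFinset v),
    ← add_sum_erase _ _ hv]
  omega

theorem Connected.card_le_card_edgeFinset_add_one (hG : G.Connected) :
    Fintype.card V ≤ #G.edgeFinset + 1 := by
  simpa [Nat.card_eq_fintype_card, edgeFinset_card] using hG.card_vert_le_card_edgeSet_add_one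

end

theorem sum_adjEigenvalues_sq {n : ℕ} (G : SimpleGraph (Fin n)) [DecidableRel G.Adj] : ∑ i, adjEigenvalues G i ^ 2 = 2 * #G.edgeFinset := by
  have h := (G.isHermitian_adjMatrix ℝ).trace_pow_eq_sum_eigenvalues_pow 2
  rw [trace_adjMatrix_sq] at h
  exact h.symm

theorem Connected.adjEigenvalues_sq_le {n : ℕ} {G : SimpleGraph (Fin n)} [DecidableRel G.Adj]
    (hG : G.Connected) (i : Fin n) :
    adjEigenvalues G i ^ 2 ≤ 2 * #G.edgeFinset - ((n : ℝ) - 1) := by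
  have hA := G.isHermitian_adjMatrix ℝ
  have hμ : HasEigenvalue (toLin' (G.adjMatrix ℝ ^ 2)) (hA.eigenvalues i ^ 2) := by
    rw [toLin'_pow]
    exact (hA.hasEigenvalue_toLin'_eigenvalues i).pow 2
  obtain ⟨v, hv⟩ := exists_norm_le_sum_norm_of_hasEigenvalue hμ
  have hentry (u : Fin n) : ‖(G.adjMatrix ℝ ^ 2) v u‖ = (G.adjMatrix ℝ ^ 2) v u := by
    rw [adjMatrix_pow_apply_eq_card_walk, Real.norm_natCast]
  have hdeg := G.sum_degree_neighborFinset_add_card_sub_one_le v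
    fun w hw => (hG.preconnected w v).degree_pos_left hw
  rw [Fintype.card_fin] at hdeg
  have hdeg' : ∑ w ∈ G.neighborFinset v, (G.degree w : ℝ) + (n - 1) ≤ 2 * #G.edgeFinset := by
    have := (Nat.cast_le (α := ℝ)).mpr hdeg
    push_cast [Nat.cast_sub i.pos] at this
    exact this
  calc adjEigenvalues G i ^ 2 = ‖hA.eigenvalues i ^ 2‖ := (Real.norm_of_nonneg (sq_nonneg _)).symm
    _ ≤ ∑ u, ‖(G.adjMatrix ℝ ^ 2) v u‖ := hv
    _ = ∑ w ∈ G.neighborFinset v, (G.degree w : ℝ) := by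
      simp only [hentry, sum_adjMatrix_sq_apply]
    _ ≤ _ := by linarith

end SimpleGraph

/-- For a connected graph with `m` edges and `n` vertices,
`∑_{i<j} λᵢ² λⱼ² ≥ m(n-1)`, and consequently `∑_{i<j} λᵢ² λⱼ² ≥ (n-1)²`. -/
theorem sum_pair_sq_ge {n m : ℕ} (G : SimpleGraph (Fin n)) [DecidableRel G.Adj]
    (hG : G.Connected) (hm : G.edgeFinset.card = m) :
    (m : ℝ) * ((n : ℝ) - 1) ≤
        ∑ i, ∑ j ∈ Finset.Ioi i, adjEigenvalues G i ^ 2 * adjEigenvalues G j ^ 2 ∧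
      ((n : ℝ) - 1) ^ 2 ≤
        ∑ i, ∑ j ∈ Finset.Ioi i, adjEigenvalues G i ^ 2 * adjEigenvalues G j ^ 2 := by
  subst hm
  have hpairs := sum_mul_sub_le_two_mul_sum_sum_Ioi_mul (a := fun i => adjEigenvalues G i ^ 2)
    (fun i => sq_nonneg _) hG.adjEigenvalues_sq_le
  rw [G.sum_adjEigenvalues_sq] at hpairs
  have hedges : (n : ℝ) ≤ #G.edgeFinset + 1 := by
    exact_mod_cast Fintype.card_fin n ▸ hG.card_le_card_edgeFinset_add_one
  have hn : (1 : ℝ) ≤ n := by exact_mod_cast Fin.pos_iff_nonempty.mpr hG.nonempty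
  have hfirst : (#G.edgeFinset : ℝ) * (n - 1) ≤
      ∑ i, ∑ j ∈ Ioi i, adjEigenvalues G i ^ 2 * adjEigenvalues G j ^ 2 := by
    linarith
  exact ⟨hfirst, le_trans (by nlinarith) hfirst⟩
end
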